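/- Let n ≥ 1, let V and B₁, B₂ be real n×n matrices with B_k = b_k α_kᵀ of rank one (entries (B_k)_{jl} = (b_k)_j (α_k)_l) for k = 1,2, let s₁, s₂ : ℝ → ℝ be continuous, and let i : ℝ → ℝ^n (a row vector) be differentiable with i'(t) = i(t)·(s₁(t)·B₁ + s₂(t)·B₂ − V) for all t. Define ĩ_k(t) = i(t)·b_k and kernels a_{jk}(u) = α_j·exp(−u·V)·b_k for j,k ∈ {1,2}. Then for all t ≥ 0 and k ∈ {1,2}: ĩ_k(t) = i(0)·exp(−t·V)·b_k + ∫_0^t [ s₁(τ)·ĩ₁(τ)·a_{1k}(t−τ) + s₂(τ)·ĩ₂(τ)·a_{2k}(t−τ) ] dτ. -/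

import Mathlib

/-!
Variation of constants: for fixed `t` and `c`, the derivative of `τ ↦ i(τ) e^{(τ-t)V} c` is
`i(τ) (s₁ B₁ + s₂ B₂) e^{(τ-t)V} c`, the `-V` of the equation cancelling the derivative of the
exponential. Integrating over `[0, t]` gives `i(t) c` as `i(0) e^{-tV} c` plus a convolution, and
for rank-one `B_k = b_k α_kᵀ` the forcing `i(τ) B_k` is `ĩ_k(τ) α_k`.
-/

open Matrix MeasureTheory

section Calculus

variable {ι : Type*} [Fintype ι]

theorem HasDerivAt.dotProduct {𝕜 : Type*} [NontriviallyNormedField 𝕜] {u v : 𝕜 → ι → 𝕜}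
    {u' v' : ι → 𝕜} {x : 𝕜} (hu : HasDerivAt u u' x) (hv : HasDerivAt v v' x) :
    HasDerivAt (fun t => u t ⬝ᵥ v t) (u' ⬝ᵥ v x + u x ⬝ᵥ v') x :=
  (HasDerivAt.fun_sum fun j (_ : j ∈ Finset.univ) =>
    (hasDerivAt_pi.1 hu j).mul (hasDerivAt_pi.1 hv j)).congr_deriv Finset.sum_add_distrib

theorem HasDerivAt.mulVec_const {𝕜 : Type*} [NontriviallyNormedField 𝕜] {M : 𝕜 → Matrix ι ι 𝕜}
    {M' : Matrix ι ι 𝕜} {x : 𝕜} (hM : HasDerivAt M M' x) (c : ι → 𝕜) :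
    HasDerivAt (fun t => M t *ᵥ c) (M' *ᵥ c) x :=
  hasDerivAt_pi.2 fun j => by
    have h := (hasDerivAt_pi.1 hM j).dotProduct (hasDerivAt_const x c)
    rwa [dotProduct_zero, add_zero] at h

variable [DecidableEq ι]

attribute [local instance] Matrix.linftyOpNormedRing Matrix.linftyOpNormedAlgebra

theorem hasDerivAt_exp_sub_smul (V : Matrix ι ι ℝ) (t x : ℝ) :
    HasDerivAt (fun τ : ℝ => NormedSpace.exp ((τ - t) • V))
      (V * NormedSpace.exp ((x - t) • V)) x := by
  have h := (hasDerivAt_exp_smul_const' V (x - t)).scomp x ((hasDerivAt_id x).sub_const t)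
  rwa [one_smul] at h

theorem dotProduct_eq_exp_add_integral_of_hasDerivAt {V : Matrix ι ι ℝ} {y F : ℝ → ι → ℝ}
    (hF : Continuous F) (hy : ∀ t, HasDerivAt y (F t - y t ᵥ* V) t) (c : ι → ℝ) (t : ℝ) :
    y t ⬝ᵥ c = (y 0 ᵥ* NormedSpace.exp ((-t) • V)) ⬝ᵥ c +
      ∫ τ in (0 : ℝ)..t, F τ ⬝ᵥ (NormedSpace.exp ((τ - t) • V) *ᵥ c) := by
  set E : ℝ → Matrix ι ι ℝ := fun τ => NormedSpace.exp ((τ - t) • V)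
  have hE : ∀ τ, HasDerivAt E (V * E τ) τ := hasDerivAt_exp_sub_smul V t
  have hderiv : ∀ τ, HasDerivAt (fun τ => y τ ⬝ᵥ (E τ *ᵥ c)) (F τ ⬝ᵥ (E τ *ᵥ c)) τ := by
    intro τ
    refine ((hy τ).dotProduct ((hE τ).mulVec_const c)).congr_deriv ?_
    rw [← mulVec_mulVec, dotProduct_mulVec (y τ) V, sub_dotProduct, sub_add_cancel]
  have hE_cont : Continuous E := continuous_iff_continuousAt.2 fun τ => (hE τ).continuousAt
  have hFTC := intervalIntegral.integral_eq_sub_of_hasDerivAt (fun τ _ => hderiv τ)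
    ((hF.dotProduct (hE_cont.matrix_mulVec continuous_const)).intervalIntegrable 0 t)
  simp only [E, sub_self, zero_smul, NormedSpace.exp_zero, one_mulVec, zero_sub,
    dotProduct_mulVec (y 0)] at hFTC
  linarith

end Calculus

theorem stmt8_general (n : ℕ) (V : Matrix (Fin n) (Fin n) ℝ)
    (b₁ b₂ α₁ α₂ : Fin n → ℝ)
    (B₁ B₂ : Matrix (Fin n) (Fin n) ℝ)
    (hB₁ : ∀ j l, B₁ j l = b₁ j * α₁ l) (hB₂ : ∀ j l, B₂ j l = b₂ j * α₂ l)
    (s₁ s₂ : ℝ → ℝ) (hs₁ : Continuous s₁) (hs₂ : Continuous s₂)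
    (i : ℝ → Fin n → ℝ)
    (hi : ∀ t : ℝ, HasDerivAt i ((i t) ᵥ* (s₁ t • B₁ + s₂ t • B₂ - V)) t)
    (itil₁ itil₂ : ℝ → ℝ)
    (hitil₁ : ∀ t, itil₁ t = i t ⬝ᵥ b₁) (hitil₂ : ∀ t, itil₂ t = i t ⬝ᵥ b₂)
    (a₁₁ a₁₂ a₂₁ a₂₂ : ℝ → ℝ)
    (ha₁₁ : ∀ u : ℝ, a₁₁ u = α₁ ⬝ᵥ (NormedSpace.exp ((-u) • V) *ᵥ b₁))
    (ha₁₂ : ∀ u : ℝ, a₁₂ u = α₁ ⬝ᵥ (NormedSpace.exp ((-u) • V) *ᵥ b₂))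
    (ha₂₁ : ∀ u : ℝ, a₂₁ u = α₂ ⬝ᵥ (NormedSpace.exp ((-u) • V) *ᵥ b₁))
    (ha₂₂ : ∀ u : ℝ, a₂₂ u = α₂ ⬝ᵥ (NormedSpace.exp ((-u) • V) *ᵥ b₂)) :
    ∀ t : ℝ, 0 ≤ t →
      (itil₁ t = ((i 0) ᵥ* NormedSpace.exp ((-t) • V)) ⬝ᵥ b₁ +
        ∫ τ in (0:ℝ)..t,
          (s₁ τ * itil₁ τ * a₁₁ (t - τ) + s₂ τ * itil₂ τ * a₂₁ (t - τ))) ∧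
      (itil₂ t = ((i 0) ᵥ* NormedSpace.exp ((-t) • V)) ⬝ᵥ b₂ +
        ∫ τ in (0:ℝ)..t,
          (s₁ τ * itil₁ τ * a₁₂ (t - τ) + s₂ τ * itil₂ τ * a₂₂ (t - τ))) := by
  have hB₁' : B₁ = vecMulVec b₁ α₁ := Matrix.ext hB₁
  have hB₂' : B₂ = vecMulVec b₂ α₂ := Matrix.ext hB₂
  set F : ℝ → Fin n → ℝ := fun τ => i τ ᵥ* (s₁ τ • B₁ + s₂ τ • B₂)
  have hi_cont : Continuous i := continuous_iff_continuousAt.2 fun t => (hi t).continuousAt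
  have hF : Continuous F :=
    hi_cont.matrix_vecMul ((hs₁.smul continuous_const).add (hs₂.smul continuous_const))
  have hi' : ∀ t, HasDerivAt i (F t - i t ᵥ* V) t := by
    simpa only [F, vecMul_sub] using hi
  have hF_rankOne : ∀ τ w,
      F τ ⬝ᵥ w = s₁ τ * itil₁ τ * (α₁ ⬝ᵥ w) + s₂ τ * itil₂ τ * (α₂ ⬝ᵥ w) := by
    intro τ w
    simp only [F, vecMul_add, vecMul_smul, hB₁', hB₂', vecMul_vecMulVec, add_dotProduct,
      smul_dotProduct, smul_eq_mul, hitil₁, hitil₂]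
    ring
  intro t _
  rw [hitil₁ t, hitil₂ t]
  simp only [ha₁₁, ha₁₂, ha₂₁, ha₂₂, neg_sub, ← hF_rankOne]
  exact ⟨dotProduct_eq_exp_add_integral_of_hasDerivAt hF hi' b₁ t,
    dotProduct_eq_exp_add_integral_of_hasDerivAt hF hi' b₂ t⟩

/-- Coupled renewal system (ksys) for a SIR-PH-FA model with two susceptible
classes and rank-one new-infections matrices `B_k = b_k α_kᵀ`: the total forces
of infection `ĩ_k(t) = i(t)·b_k` satisfy a system of two renewal integral
equations with matrix-exponential kernels `a_{jk}(u) = α_j·exp(−uV)·b_k`. -/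
theorem stmt8 (n : ℕ) (hn : 1 ≤ n) (V : Matrix (Fin n) (Fin n) ℝ)
    (b₁ b₂ α₁ α₂ : Fin n → ℝ)
    (B₁ B₂ : Matrix (Fin n) (Fin n) ℝ)
    (hB₁ : ∀ j l, B₁ j l = b₁ j * α₁ l) (hB₂ : ∀ j l, B₂ j l = b₂ j * α₂ l)
    (s₁ s₂ : ℝ → ℝ) (hs₁ : Continuous s₁) (hs₂ : Continuous s₂)
    (i : ℝ → Fin n → ℝ)
    (hi : ∀ t : ℝ, HasDerivAt i ((i t) ᵥ* (s₁ t • B₁ + s₂ t • B₂ - V)) t)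
    (itil₁ itil₂ : ℝ → ℝ)
    (hitil₁ : ∀ t, itil₁ t = i t ⬝ᵥ b₁) (hitil₂ : ∀ t, itil₂ t = i t ⬝ᵥ b₂)
    (a₁₁ a₁₂ a₂₁ a₂₂ : ℝ → ℝ)
    (ha₁₁ : ∀ u : ℝ, a₁₁ u = α₁ ⬝ᵥ (NormedSpace.exp ((-u) • V) *ᵥ b₁))
    (ha₁₂ : ∀ u : ℝ, a₁₂ u = α₁ ⬝ᵥ (NormedSpace.exp ((-u) • V) *ᵥ b₂))
    (ha₂₁ : ∀ u : ℝ, a₂₁ u = α₂ ⬝ᵥ (NormedSpace.exp ((-u) • V) *ᵥ b₁))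
    (ha₂₂ : ∀ u : ℝ, a₂₂ u = α₂ ⬝ᵥ (NormedSpace.exp ((-u) • V) *ᵥ b₂)) :
    ∀ t : ℝ, 0 ≤ t →
      (itil₁ t = ((i 0) ᵥ* NormedSpace.exp ((-t) • V)) ⬝ᵥ b₁ +
        ∫ τ in (0:ℝ)..t,
          (s₁ τ * itil₁ τ * a₁₁ (t - τ) + s₂ τ * itil₂ τ * a₂₁ (t - τ))) ∧
      (itil₂ t = ((i 0) ᵥ* NormedSpace.exp ((-t) • V)) ⬝ᵥ b₂ +
        ∫ τ in (0:ℝ)..t,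
          (s₁ τ * itil₁ τ * a₁₂ (t - τ) + s₂ τ * itil₂ τ * a₂₂ (t - τ))) :=
  stmt8_general n V b₁ b₂ α₁ α₂ B₁ B₂ hB₁ hB₂ s₁ s₂ hs₁ hs₂ i hi itil₁ itil₂ hitil₁ hitil₂ a₁₁ a₁₂
    a₂₁ a₂₂ ha₁₁ ha₁₂ ha₂₁ ha₂₂
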